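/- Let F be a field of characteristic 2, let p = x^d + p₁x^{d-1} + … + p_d ∈ F[x] be a monic irreducible polynomial of odd degree d = 2e+1 (where p_k denotes the coefficient of x^{d-k}, with p₀ = 1), let L = F[x]/(p), and let t_p : L → F be the F-linear map with t_p(x^j) = 0 for 0 ≤ j ≤ d-2 and t_p(x^{d-1}) = 1. Let a ∈ F and let i ≥ 0 be an integer. Then the Scharlau transfer t_p∘[1, ax^i] (a quadratic form of dimension 2d over F) is Witt equivalent to the orthogonal sum ⊥_{j=0}^{e} [p_{2j}, aγ_{i-2j}], where γ_n ∈ F is the coefficient of x^{d-1} in the remainder of x^{d+n-1} upon division by p for n ≥ 0, and γ_n := 0 for n < 0. -/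

import Mathlib

open QuadraticMap Polynomial

/-- The binary quadratic form `[a,b] : (u,v) ↦ a u² + u v + b v²` over `K`. -/
noncomputable def binQF (K : Type*) [CommRing K] (a b : K) : QuadraticForm K (K × K) :=
  a • QuadraticMap.linMulLin (LinearMap.fst K K K) (LinearMap.fst K K K)
    + QuadraticMap.linMulLin (LinearMap.fst K K K) (LinearMap.snd K K K)
    + b • QuadraticMap.linMulLin (LinearMap.snd K K K) (LinearMap.snd K K K)

/-- The hyperbolic plane `(u,v) ↦ u v` over `K`. -/
noncomputable def hypQF (K : Type*) [CommRing K] : QuadraticForm K (K × K) :=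
  QuadraticMap.linMulLin (LinearMap.fst K K K) (LinearMap.snd K K K)

/-- The orthogonal sum of `r` copies of the hyperbolic plane over `K`. -/
noncomputable def hypPow (K : Type*) [CommRing K] (r : ℕ) : QuadraticForm K (Fin r → K × K) :=
  QuadraticMap.pi fun _ => hypQF K

/-- Witt equivalence of quadratic forms over `K`: `Q₁ ⊥ H^{⊥r}` is isometric to
`Q₂ ⊥ H^{⊥s}` for some `r, s`. -/
def WittEquiv {K : Type*} [CommRing K] {V₁ V₂ : Type*} [AddCommGroup V₁] [Module K V₁]
    [AddCommGroup V₂] [Module K V₂]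
    (Q₁ : QuadraticForm K V₁) (Q₂ : QuadraticForm K V₂) : Prop :=
  ∃ r s : ℕ, (Q₁.prod (hypPow K r)).Equivalent (Q₂.prod (hypPow K s))

/-- The Scharlau transfer of a quadratic form `Q` over `L` along an `F`-linear functional
`t : L → F`: the quadratic form `t ∘ Q` over `F` on `V` viewed as an `F`-vector space. -/
noncomputable def scharlauTransfer {F L : Type*} [Field F] [CommRing L] [Algebra F L]
    (V : Type*) [AddCommGroup V] [Module L V] [Module F V] [IsScalarTower F L V]
    (t : L →ₗ[F] F) (Q : QuadraticForm L V) : QuadraticForm F V :=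
  t.compQuadraticMap' Q

/-!
Under the pairing `(u, v) ↦ t (u * v)` the Horner elements `πₙ = xⁿ + p₁ xⁿ⁻¹ + ⋯ + pₙ` are
biorthogonal to the powers `x ^ (d - 1 - n)`. Writing `u` in the first family and `v` in the
second, the cross term of `t ∘ [1, a xⁱ]` becomes `∑ uₙ vₙ`, and since squaring is additive in
characteristic `2` the square terms split as well: the transfer is the orthogonal sum of the
binary forms `[t (πₙ²), a t (x ^ (i + 2 (d - 1 - n)))]`. Expanding one factor of `πₙ²` in powers
of `x` gives `t (πₙ²) = p_{2n-2e}`, which vanishes for `n < e`; those `e` summands are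
hyperbolic planes, and for `n = e + j` the entries are `p_{2j}` and `a γ_{i-2j}`.
-/

theorem binQF_apply {K : Type*} [CommRing K] (a b : K) (x : K × K) :
    binQF K a b x = a * (x.1 * x.1) + x.1 * x.2 + b * (x.2 * x.2) := by
  simp [binQF]

theorem hypQF_apply {K : Type*} [CommRing K] (x : K × K) : hypQF K x = x.1 * x.2 := by
  simp [hypQF]

theorem binQF_zero_equivalent_hypQF (K : Type*) [CommRing K] (b : K) :
    (binQF K 0 b).Equivalent (hypQF K) :=
  ⟨{ toFun := fun x => (x.1 + b * x.2, x.2)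
     invFun := fun x => (x.1 - b * x.2, x.2)
     map_add' := fun x y => Prod.ext (by simp; ring) rfl
     map_smul' := fun c x => Prod.ext (by simp; ring) rfl
     left_inv := fun x => by simp
     right_inv := fun x => by simp
     map_app' := fun x => by simp only [binQF_apply, hypQF_apply]; ring }⟩

theorem QuadraticMap.pi_sum_equivalent_prod {R M P ι₁ ι₂ : Type*} [CommRing R]
    [AddCommGroup M] [Module R M] [AddCommGroup P] [Module R P] [Fintype ι₁] [Fintype ι₂]
    (Q : ι₁ ⊕ ι₂ → QuadraticMap R M P) :
    (pi Q).Equivalent ((pi fun i => Q (.inl i)).prod (pi fun j => Q (.inr j))) :=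
  ⟨{ LinearEquiv.sumArrowLequivProdArrow ι₁ ι₂ R M with
     map_app' := fun x => by simp [pi_apply, Fintype.sum_sum_type] }⟩

theorem QuadraticMap.prod_hypPow_zero_equivalent {K V : Type*} [CommRing K] [AddCommGroup V]
    [Module K V] (Q : QuadraticForm K V) : (Q.prod (hypPow K 0)).Equivalent Q :=
  ⟨{ LinearEquiv.prodUnique with map_app' := fun x => by simp [hypPow, pi_apply] }⟩

theorem WittEquiv.of_equivalent_prod_hypPow {K V₁ V₂ : Type*} [CommRing K] [AddCommGroup V₁]
    [Module K V₁] [AddCommGroup V₂] [Module K V₂] {Q₁ : QuadraticForm K V₁}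
    {Q₂ : QuadraticForm K V₂} (s : ℕ) (h : Q₁.Equivalent (Q₂.prod (hypPow K s))) :
    WittEquiv Q₁ Q₂ :=
  ⟨0, s, (prod_hypPow_zero_equivalent Q₁).trans h⟩

section Biorthogonal

variable {F L ι : Type*} [Field F] [CommRing L] [Algebra F L] [Fintype ι]

def biorthoMap (B D : ι → L) : (ι → F × F) →ₗ[F] L × L where
  toFun w := (∑ j, (w j).1 • B j, ∑ j, (w j).2 • D j)
  map_add' w w' := by simp [add_smul, Finset.sum_add_distrib]
  map_smul' c w := by simp [Finset.smul_sum, smul_smul]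

variable [DecidableEq ι] {t : L →ₗ[F] F} {B D : ι → L}

theorem transfer_binQF_biorthoMap [CharP L 2]
    (hBD : ∀ j k, t (B j * D k) = if j = k then 1 else 0) (α β : L) (w : ι → F × F) :
    scharlauTransfer (L × L) t (binQF L α β) (biorthoMap B D w) =
      pi (fun j => binQF F (t (α * B j ^ 2)) (t (β * D j ^ 2))) w := by
  have hsq : ∀ (γ : L) (c : ι → F) (E : ι → L),
      t (γ * ((∑ j, c j • E j) * ∑ j, c j • E j)) = ∑ j, c j ^ 2 * t (γ * E j ^ 2) := by
    intro γ c E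
    rw [CharTwo.sum_mul_self]
    simp only [Finset.mul_sum, map_sum, smul_mul_assoc, mul_smul_comm, map_smul, mul_assoc,
      smul_eq_mul, pow_two]
  have hcross : t ((∑ j, (w j).1 • B j) * ∑ k, (w k).2 • D k) = ∑ j, (w j).1 * (w j).2 := by
    simp only [Finset.sum_mul_sum, map_sum, smul_mul_smul, map_smul, hBD, smul_eq_mul,
      mul_ite, mul_one, mul_zero, Finset.sum_ite_eq, Finset.mem_univ, if_true]
  simp only [scharlauTransfer, LinearMap.compQuadraticMap'_apply, binQF_apply, map_add, hsq,
    hcross, biorthoMap, LinearMap.coe_mk, AddHom.coe_mk, pi_apply, Finset.sum_add_distrib]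
  simp only [← Finset.sum_add_distrib]
  refine Finset.sum_congr rfl fun j _ => ?_
  ring

theorem biorthoMap_injective (hBD : ∀ j k, t (B j * D k) = if j = k then 1 else 0) :
    Function.Injective (biorthoMap (F := F) B D) := by
  have hB : ∀ (c : ι → F) k, t ((∑ j, c j • B j) * D k) = c k := fun c k => by
    simp [Finset.sum_mul, hBD]
  have hD : ∀ (c : ι → F) j, t (B j * ∑ k, c k • D k) = c j := fun c j => by
    simp [Finset.mul_sum, hBD]
  intro w w' h
  funext k
  have h1 := congrArg (fun x => t (x.1 * D k)) h
  have h2 := congrArg (fun x => t (B k * x.2)) h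
  simp only [biorthoMap, LinearMap.coe_mk, AddHom.coe_mk, hB, hD] at h1 h2
  exact Prod.ext h1 h2

theorem transfer_binQF_equivalent_pi [CharP L 2] [FiniteDimensional F L]
    (hBD : ∀ j k, t (B j * D k) = if j = k then 1 else 0)
    (hcard : Fintype.card ι = Module.finrank F L) (α β : L) :
    (scharlauTransfer (L × L) t (binQF L α β)).Equivalent
      (pi fun j => binQF F (t (α * B j ^ 2)) (t (β * D j ^ 2))) := by
  have hdim : Module.finrank F (ι → F × F) = Module.finrank F (L × L) := by
    simp [Module.finrank_pi_fintype, Module.finrank_prod, hcard]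
    ring
  let Φ := (biorthoMap B D).linearEquivOfInjective (biorthoMap_injective hBD) hdim
  refine .symm ⟨{ Φ with map_app' := fun w => ?_ }⟩
  show scharlauTransfer _ t _ (Φ w) = _
  rw [LinearMap.linearEquivOfInjective_apply, transfer_binQF_biorthoMap hBD]

end Biorthogonal

section Horner

open AdjoinRoot

variable {R : Type*} [CommRing R]

theorem coeff_divByMonic_X_pow [Nontrivial R] (p : R[X]) (k j : ℕ) :
    (p /ₘ X ^ k).coeff j = p.coeff (j + k) := by
  have h := congrArg (fun q => q.coeff (j + k)) (modByMonic_add_div p (X ^ k))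
  simp only [coeff_add, coeff_X_pow_mul', if_pos (Nat.le_add_left k j), Nat.add_sub_cancel] at h
  have hdeg : (p %ₘ X ^ k).degree < (j + k : ℕ) :=
    calc (p %ₘ X ^ k).degree < (X ^ k : R[X]).degree := degree_modByMonic_lt _ (monic_X_pow k)
      _ ≤ (j + k : ℕ) := by rw [degree_X_pow]; exact_mod_cast Nat.le_add_left k j
  rw [← h, coeff_eq_zero_of_degree_lt hdeg, zero_add]

/-- `X ^ n + p₁ X ^ (n - 1) + ⋯ + pₙ`, where `p = X ^ d + p₁ X ^ (d - 1) + ⋯ + p_d`. -/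
noncomputable def hornerPoly (p : R[X]) (n : ℕ) : R[X] :=
  p /ₘ X ^ (p.natDegree - n)

theorem natDegree_hornerPoly [Nontrivial R] (p : R[X]) {n : ℕ} (hn : n ≤ p.natDegree) :
    (hornerPoly p n).natDegree = n := by
  rw [hornerPoly, natDegree_divByMonic _ (monic_X_pow _), natDegree_X_pow]
  omega

variable {p : R[X]} {t : AdjoinRoot p →ₗ[R] R}
  (ht : ∀ j < p.natDegree, t (root p ^ j) = if j = p.natDegree - 1 then 1 else 0)
include ht

theorem apply_mk_of_natDegree_lt {f : R[X]} (hf : f.natDegree < p.natDegree) :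
    t (mk p f) = f.coeff (p.natDegree - 1) := by
  rw [← aeval_eq, aeval_eq_sum_range' hf, map_sum]
  simp only [map_smul, smul_eq_mul]
  rw [Finset.sum_congr rfl fun j hj => by rw [ht j (Finset.mem_range.mp hj)]]
  simp only [mul_ite, mul_one, mul_zero, Finset.sum_ite_eq', Finset.mem_range]
  exact if_pos (by omega)

theorem apply_mk_eq_coeff_modByMonic [Nontrivial R] (hmonic : p.Monic) (hp : p ≠ 1) (f : R[X]) :
    t (mk p f) = (f %ₘ p).coeff (p.natDegree - 1) := by
  rw [← mk_leftInverse hmonic (mk p f), modByMonicHom_mk,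
    apply_mk_of_natDegree_lt ht (natDegree_modByMonic_lt f hmonic hp)]

theorem apply_root_pow_mul_mk_hornerPoly [Nontrivial R] (hmonic : p.Monic) {m n : ℕ}
    (hm : m < p.natDegree) (hn : n < p.natDegree) :
    t (root p ^ m * mk p (hornerPoly p n)) = if m + n = p.natDegree - 1 then 1 else 0 := by
  set d := p.natDegree
  by_cases hmn : m + n < d
  · have hdeg : (X ^ m * hornerPoly p n).natDegree < d :=
      (natDegree_mul_le.trans (by rw [natDegree_X_pow, natDegree_hornerPoly p hn.le])).trans_lt hmn
    rw [← mk_X, ← map_pow, ← map_mul, apply_mk_of_natDegree_lt ht hdeg, coeff_X_pow_mul',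
      if_pos (by omega), hornerPoly, coeff_divByMonic_X_pow]
    split_ifs with h
    · rw [show d - 1 - m + (d - n) = d by omega]
      exact hmonic.coeff_natDegree
    · exact coeff_eq_zero_of_natDegree_lt (by omega)
  · -- `X ^ k * (p /ₘ X ^ k) ≡ -(p %ₘ X ^ k)` modulo `p`, and the right side has small degree.
    set k := d - n
    have hquot : root p ^ k * mk p (p /ₘ X ^ k) = -mk p (p %ₘ X ^ k) := by
      have := congrArg (mk p) (modByMonic_add_div p (X ^ k))
      rw [map_add, map_mul, mk_self, map_pow, mk_X] at this
      exact eq_neg_of_add_eq_zero_right this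
    have hsplit : root p ^ m * mk p (hornerPoly p n) = -mk p (X ^ (m - k) * (p %ₘ X ^ k)) := by
      rw [hornerPoly, show m = m - k + k by omega, pow_add, mul_assoc, hquot, Nat.add_sub_cancel,
        map_mul, map_pow, mk_X, mul_neg]
    have hdeg : (X ^ (m - k) * (p %ₘ X ^ k)).natDegree < d := by
      refine (natDegree_mul_le.trans ?_).trans_lt hm
      rw [natDegree_X_pow]
      have := natDegree_modByMonic_le p (monic_X_pow (R := R) k)
      rw [natDegree_X_pow] at this
      omega
    rw [hsplit, map_neg, apply_mk_of_natDegree_lt ht hdeg, coeff_X_pow_mul', if_pos (by omega),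
      coeff_eq_zero_of_degree_lt, neg_zero, if_neg (by omega)]
    calc (p %ₘ X ^ k).degree < (X ^ k : R[X]).degree := degree_modByMonic_lt _ (monic_X_pow k)
      _ ≤ (d - 1 - (m - k) : ℕ) := by rw [degree_X_pow]; exact_mod_cast (by omega)

theorem apply_mk_mul_mk_hornerPoly [Nontrivial R] (hmonic : p.Monic) {f : R[X]}
    (hf : f.natDegree < p.natDegree) {n : ℕ} (hn : n < p.natDegree) :
    t (mk p f * mk p (hornerPoly p n)) = f.coeff (p.natDegree - 1 - n) := by
  rw [← aeval_eq, aeval_eq_sum_range' hf, Finset.sum_mul, map_sum]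
  simp only [smul_mul_assoc, map_smul, smul_eq_mul]
  rw [Finset.sum_congr rfl fun m hm => by
    rw [apply_root_pow_mul_mk_hornerPoly ht hmonic (Finset.mem_range.mp hm) hn]]
  simp_rw [show ∀ m, m + n = p.natDegree - 1 ↔ m = p.natDegree - 1 - n from fun m => by omega,
    mul_ite, mul_one, mul_zero, Finset.sum_ite_eq', Finset.mem_range]
  exact if_pos (by omega)

theorem apply_mk_hornerPoly_sq [Nontrivial R] (hmonic : p.Monic) {n : ℕ}
    (hn : n < p.natDegree) :
    t (mk p (hornerPoly p n) ^ 2) = p.coeff (2 * p.natDegree - 1 - 2 * n) := by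
  rw [pow_two, apply_mk_mul_mk_hornerPoly ht hmonic (by rwa [natDegree_hornerPoly p hn.le]) hn,
    hornerPoly, coeff_divByMonic_X_pow]
  congr 1
  omega

theorem hornerPoly_root_pow_biorthogonal [Nontrivial R] (hmonic : p.Monic) {ι : Type*}
    [DecidableEq ι] {ν : ι → ℕ} (hν : Function.Injective ν) (hνd : ∀ s, ν s < p.natDegree)
    (s s' : ι) :
    t (mk p (hornerPoly p (ν s)) * root p ^ (p.natDegree - 1 - ν s')) =
      if s = s' then 1 else 0 := by
  have := hνd s
  have := hνd s'
  rw [mul_comm, apply_root_pow_mul_mk_hornerPoly ht hmonic (by omega) (hνd s)]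
  exact if_congr (by rw [← hν.eq_iff]; omega) rfl rfl

end Horner

theorem transfer_one_ax_pow_odd_degree_general
    (F : Type*) [Field F] [CharP F 2] (p : Polynomial F)
    (hmonic : p.Monic)
    (d e : ℕ) (hd : p.natDegree = d) (hde : d = 2 * e + 1)
    (t : AdjoinRoot p →ₗ[F] F)
    (ht : ∀ j : ℕ, j < d → t (AdjoinRoot.root p ^ j) = if j = d - 1 then 1 else 0)
    (γ : ℤ → F)
    (hγ : ∀ n : ℤ, γ n =
      if n < 0 then 0 else ((X : Polynomial F) ^ (d + n.toNat - 1) %ₘ p).coeff (d - 1))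
    (a : F) (i : ℕ) :
    WittEquiv
      (scharlauTransfer _ t
        (binQF (AdjoinRoot p) 1 (algebraMap F (AdjoinRoot p) a * AdjoinRoot.root p ^ i)))
      (QuadraticMap.pi fun j : Fin (e + 1) =>
        binQF F (p.coeff (d - 2 * (j : ℕ))) (a * γ ((i : ℤ) - 2 * (j : ℕ)))) := by
  subst hd
  have hp1 : p ≠ 1 := by rintro rfl; simp at hde
  have : Nontrivial (AdjoinRoot p) :=
    AdjoinRoot.nontrivial p (natDegree_pos_iff_degree_pos.mp (by omega)).ne'
  have : CharP (AdjoinRoot p) 2 := charP_of_injective_algebraMap' F 2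
  have : FiniteDimensional F (AdjoinRoot p) := hmonic.finite_adjoinRoot
  have hγt : ∀ m : ℕ, t (AdjoinRoot.root p ^ m) = γ (m - 2 * e) := by
    intro m
    rw [hγ]
    split_ifs with h
    · rw [ht m (by omega), if_neg (by omega)]
    · rw [← AdjoinRoot.mk_X, ← map_pow, apply_mk_eq_coeff_modByMonic ht hmonic hp1]
      congr 3
      omega
  let ν : Fin (e + 1) ⊕ Fin e → ℕ := Sum.elim (fun k => e + k) (fun j => j)
  have hν : Function.Injective ν := by
    rintro (k | j) (k' | j') h <;> simp [ν, Fin.ext_iff] at h ⊢ <;> omega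
  have hνd : ∀ s, ν s < p.natDegree := by rintro (k | j) <;> simp [ν] <;> omega
  refine WittEquiv.of_equivalent_prod_hypPow e <|
    (transfer_binQF_equivalent_pi (hornerPoly_root_pow_biorthogonal ht hmonic hν hνd)
      (by rw [(AdjoinRoot.powerBasis hmonic.ne_zero).finrank,
        AdjoinRoot.powerBasis_dim]; simp; omega) _ _).trans <|
    (pi_sum_equivalent_prod _).trans (.prod (.pi fun k => ?_) (.pi fun j => ?_))
  · rw [one_mul, apply_mk_hornerPoly_sq ht hmonic (hνd _), mul_assoc, ← pow_mul, ← pow_add,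
      ← Algebra.smul_def, map_smul, smul_eq_mul, hγt,
      show 2 * p.natDegree - 1 - 2 * ν (.inl k) = p.natDegree - 2 * k by simp [ν]; omega,
      show ((i + (p.natDegree - 1 - ν (.inl k)) * 2 : ℕ) : ℤ) - 2 * e = i - 2 * (k : ℕ) by
        simp [ν]; omega]
    exact .refl _
  · rw [one_mul, apply_mk_hornerPoly_sq ht hmonic (hνd _),
      coeff_eq_zero_of_natDegree_lt (by simp [ν]; omega)]
    exact binQF_zero_equivalent_hypQF F _

/-- Lemma 4.2(i), odd degree case: for `p` monic irreducible of odd degree `d = 2e+1` over a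
field `F` of characteristic `2`, the Scharlau transfer of `[1, a·x^i]` is Witt equivalent to
`⊥_{j=0}^{e} [p_{2j}, a·γ_{i-2j}]`. -/
theorem transfer_one_ax_pow_odd_degree
    (F : Type*) [Field F] [CharP F 2] (p : Polynomial F)
    (hmonic : p.Monic) (hirr : Irreducible p)
    (d e : ℕ) (hd : p.natDegree = d) (hde : d = 2 * e + 1)
    (t : AdjoinRoot p →ₗ[F] F)
    (ht : ∀ j : ℕ, j < d → t (AdjoinRoot.root p ^ j) = if j = d - 1 then 1 else 0)
    (γ : ℤ → F)
    (hγ : ∀ n : ℤ, γ n =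
      if n < 0 then 0 else ((X : Polynomial F) ^ (d + n.toNat - 1) %ₘ p).coeff (d - 1))
    (a : F) (i : ℕ) :
    WittEquiv
      (scharlauTransfer _ t
        (binQF (AdjoinRoot p) 1 (algebraMap F (AdjoinRoot p) a * AdjoinRoot.root p ^ i)))
      (QuadraticMap.pi fun j : Fin (e + 1) =>
        binQF F (p.coeff (d - 2 * (j : ℕ))) (a * γ ((i : ℤ) - 2 * (j : ℕ)))) :=
  transfer_one_ax_pow_odd_degree_general F p hmonic d e hd hde t ht γ hγ a i
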